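/- arXiv:1607.01508 — 4 statements merged into one kernel-verified Lean document; each statement's English description precedes it below -/
import Mathlib

section
/- Let s, λ : ℝ → ℝ with s continuously differentiable, nondecreasing, valued in [0,1], and λ Lipschitz continuous, nondecreasing with λ(0) = 0. Define Φ(τ) = ∫₀^τ a·s'(a)·λ'(s(a)) da (where λ' exists a.e.). Then for all real a, b: b·(λ(s(b)) - λ(s(a))) ≥ Φ(b) - Φ(a). -/
open MeasureTheory intervalIntegral

/-! Writing `g = λ ∘ s`, the integrand of `Φ` is `x g'(x)`, and integrating by parts against
`g - g(a)` gives `Φ(b) - Φ(a) = b (g(b) - g(a)) - ∫_a^b (g(x) - g(a)) dx`. The last integral is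
nonnegative in either orientation because `g` is monotone. -/

theorem integral_id_mul_deriv_eq {g g' : ℝ → ℝ} {a b : ℝ}
    (hg : ∀ x ∈ Set.uIcc a b, HasDerivAt g (g' x) x) (hg' : IntervalIntegrable g' volume a b) :
    ∫ x in a..b, x * g' x = b * (g b - g a) - ∫ x in a..b, (g x - g a) := by
  have hparts := integral_mul_deriv_eq_deriv_mul (u := id) (u' := fun _ => 1)
    (v := fun x => g x - g a) (fun x _ => hasDerivAt_id x) (fun x hx => (hg x hx).sub_const _)
    intervalIntegrable_const hg'
  simpa using hparts

theorem Monotone.integral_sub_left_nonneg {g : ℝ → ℝ} (hg : Monotone g) (a b : ℝ) :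
    0 ≤ ∫ x in a..b, (g x - g a) := by
  rcases le_total a b with hab | hba
  · exact integral_nonneg hab fun x hx => sub_nonneg.2 (hg hx.1)
  · rw [integral_symm, ← intervalIntegral.integral_neg]
    exact integral_nonneg hba fun x hx => neg_nonneg.2 (sub_nonpos.2 (hg hx.2))

theorem Monotone.integral_id_mul_deriv_le {g g' : ℝ → ℝ} (hmono : Monotone g) {a b : ℝ}
    (hg : ∀ x ∈ Set.uIcc a b, HasDerivAt g (g' x) x) (hg' : IntervalIntegrable g' volume a b) :
    ∫ x in a..b, x * g' x ≤ b * (g b - g a) := by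
  rw [integral_id_mul_deriv_eq hg hg']
  linarith [hmono.integral_sub_left_nonneg a b]

theorem stmt_4_general (s lam : ℝ → ℝ)
    (hs : ContDiff ℝ 1 s)
    (hsmono : Monotone s)
    (hlam : ContDiff ℝ 1 lam)
    (hlammono : Monotone lam)
    (Φ : ℝ → ℝ)
    (hΦ : ∀ τ, Φ τ = ∫ a in (0:ℝ)..τ, a * deriv s a * deriv lam (s a)) :
    ∀ a b : ℝ, Φ b - Φ a ≤ b * (lam (s b) - lam (s a)) := by
  intro a b
  have hderiv (x : ℝ) : HasDerivAt (lam ∘ s) (deriv s x * deriv lam (s x)) x :=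
    (hlam.differentiable one_ne_zero _).hasDerivAt.scomp x
      (hs.differentiable one_ne_zero x).hasDerivAt
  have hcont : Continuous fun x => deriv s x * deriv lam (s x) :=
    (hs.continuous_deriv le_rfl).mul ((hlam.continuous_deriv le_rfl).comp hs.continuous)
  have hΦ' (τ : ℝ) : Φ τ = ∫ x in (0:ℝ)..τ, x * (deriv s x * deriv lam (s x)) := by
    simp only [hΦ, mul_assoc]
  have hintegrand : Continuous fun x => x * (deriv s x * deriv lam (s x)) := continuous_id.mul hcont
  rw [hΦ', hΦ', integral_interval_sub_left (hintegrand.intervalIntegrable _ _)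
    (hintegrand.intervalIntegrable _ _)]
  exact (hlammono.comp hsmono).integral_id_mul_deriv_le (fun x _ => hderiv x)
    (hcont.intervalIntegrable a b)

/-- With `s` C¹ nondecreasing valued in `[0,1]`, `lam` C¹ nondecreasing with
`lam 0 = 0`, and `Φ τ = ∫₀^τ a s'(a) lam'(s a) da`, one has
`b (lam (s b) - lam (s a)) ≥ Φ b - Φ a` for all `a b`. -/
theorem stmt_4 (s lam : ℝ → ℝ)
    (hs : ContDiff ℝ 1 s)
    (hsmono : Monotone s)
    (hsrange : ∀ x, s x ∈ Set.Icc (0:ℝ) 1)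
    (hlam : ContDiff ℝ 1 lam)
    (hlammono : Monotone lam)
    (hlam0 : lam 0 = 0)
    (Φ : ℝ → ℝ)
    (hΦ : ∀ τ, Φ τ = ∫ a in (0:ℝ)..τ, a * deriv s a * deriv lam (s a)) :
    ∀ a b : ℝ, Φ b - Φ a ≤ b * (lam (s b) - lam (s a)) :=
  stmt_4_general s lam hs hsmono hlam hlammono Φ hΦ
end

section
/- Let δ, Δ > 0 with Δ > δ, and let A be a row-wise (δ,Δ)-M-matrix of size N. Then ‖A⁻¹‖_∞ ≤ c_{N}, where c_p = ((Δ/δ)^p − 1)/(Δ − δ); that is, the supremum norm of the inverse of A is bounded by a constant depending only on δ, Δ and N. -/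
open Matrix

/-- A `δ`-transmissive path from `i` to `j` in the matrix `A`: a list of distinct
indices `k₀ = i, …, k_L = j` with `A (k_p) (k_{p+1}) < -δ`. -/
def TransmissivePath {N : ℕ} (δ : ℝ) (A : Matrix (Fin N) (Fin N) ℝ)
    (i j : Fin N) : Prop :=
  ∃ (L : ℕ) (k : Fin (L + 1) → Fin N),
    Function.Injective k ∧ k 0 = i ∧ k (Fin.last L) = j ∧
    ∀ p : Fin L, A (k p.castSucc) (k p.succ) < -δ

/-- `A` is a row-wise `(δ,Δ)`-M-matrix. -/
def IsRowMMatrix {N : ℕ} (δ Δ : ℝ) (A : Matrix (Fin N) (Fin N) ℝ) : Prop :=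
  (∀ i, δ ≤ A i i ∧ A i i ≤ Δ) ∧
  (∀ i j, j ≠ i → A i j ≤ 0) ∧
  (∀ i, 0 ≤ ∑ j, A i j) ∧
  (∃ i, δ ≤ ∑ j, A i j) ∧
  (∀ i, ¬ δ ≤ ∑ j, A i j → ∃ j, δ ≤ ∑ l, A j l ∧ TransmissivePath δ A i j)

/-!
Let `‖·‖` be the sup norm and suppose `z i = ‖z‖`. In a row `r`, the diagonal entry is at most `Δ`
and the off-diagonal entries are nonpositive, so the defect `‖z‖ - z s` at any `s` with
`A r s < -δ` is controlled by `δ (‖z‖ - z s) ≤ ‖A z‖ + Δ (‖z‖ - z r)`. The defect vanishes at `i`,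
so along a transmissive path from `i` it stays below `c_p ‖A z‖` after `p` steps, because
`c_p = mMatrixConst δ Δ p` satisfies `δ c_{p+1} = 1 + Δ c_p`. At the end `j` of the path the row sum is at least `δ`, which gives
`δ ‖z‖ ≤ ‖A z‖ + Δ (‖z‖ - z j)`, hence `‖z‖ ≤ c_N ‖A z‖`. This makes `A` injective, and testing
the bound on sign vectors bounds the absolute row sums of `A⁻¹` by `c_N`.
-/

open Finset

noncomputable def mMatrixConst (δ Δ : ℝ) (p : ℕ) : ℝ := ((Δ / δ) ^ p - 1) / (Δ - δ)

section MMatrixConst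

variable {δ Δ : ℝ}

@[simp]
lemma mMatrixConst_zero : mMatrixConst δ Δ 0 = 0 := by simp [mMatrixConst]

lemma mul_mMatrixConst_succ (hδ : δ ≠ 0) (hδΔ : δ ≠ Δ) (p : ℕ) :
    δ * mMatrixConst δ Δ (p + 1) = 1 + Δ * mMatrixConst δ Δ p := by
  have : Δ - δ ≠ 0 := sub_ne_zero.2 hδΔ.symm
  simp only [mMatrixConst, pow_succ]
  field_simp
  ring

lemma mMatrixConst_mono (hδ : 0 < δ) (hδΔ : δ ≤ Δ) : Monotone (mMatrixConst δ Δ) := fun p q hpq => by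
  have : (Δ / δ) ^ p ≤ (Δ / δ) ^ q := pow_le_pow_right₀ ((one_le_div hδ).2 hδΔ) hpq
  exact div_le_div_of_nonneg_right (by linarith) (sub_nonneg.2 hδΔ)

lemma mMatrixConst_nonneg (hδ : 0 < δ) (hδΔ : δ ≤ Δ) (p : ℕ) : 0 ≤ mMatrixConst δ Δ p := by
  simpa using mMatrixConst_mono hδ hδΔ (Nat.zero_le p)

end MMatrixConst

lemma apply_le_pi_norm {ι : Type*} [Fintype ι] (z : ι → ℝ) (j : ι) : z j ≤ ‖z‖ :=
  (le_abs_self _).trans (norm_le_pi_norm z j)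

section RowInequalities

variable {ι : Type*} [Fintype ι] [DecidableEq ι] {A : Matrix ι ι ℝ} {δ Δ : ℝ} {r : ι}

lemma sum_row_mul_norm_add_sum_le (z : ι → ℝ) (hdiag : A r r ≤ Δ) (hoff : ∀ j ≠ r, A r j ≤ 0)
    {S : Finset ι} (hS : r ∉ S) :
    (∑ j, A r j) * ‖z‖ + ∑ s ∈ S, -A r s * (‖z‖ - z s) ≤ ‖A *ᵥ z‖ + Δ * (‖z‖ - z r) := by
  have hz := apply_le_pi_norm z
  have hAz := apply_le_pi_norm (A *ᵥ z) r
  have hexpand : (A *ᵥ z) r = (∑ j, A r j) * ‖z‖ - ∑ j, A r j * (‖z‖ - z j) := by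
    simp only [mulVec, dotProduct, mul_sub, sum_sub_distrib, sum_mul, sub_sub_cancel]
  have hsplit : ∑ j, A r j * (‖z‖ - z j) =
      A r r * (‖z‖ - z r) + ∑ j ∈ univ.erase r, A r j * (‖z‖ - z j) :=
    (add_sum_erase _ _ (mem_univ r)).symm
  have hS : ∑ s ∈ S, -A r s * (‖z‖ - z s) ≤ ∑ j ∈ univ.erase r, -A r j * (‖z‖ - z j) :=
    sum_le_sum_of_subset_of_nonneg
      (fun s hs => mem_erase.2 ⟨ne_of_mem_of_not_mem hs hS, mem_univ s⟩)
      (fun j hj _ => mul_nonneg (neg_nonneg.2 (hoff j (ne_of_mem_erase hj))) (sub_nonneg.2 (hz j)))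
  have hdiag : A r r * (‖z‖ - z r) ≤ Δ * (‖z‖ - z r) :=
    mul_le_mul_of_nonneg_right hdiag (sub_nonneg.2 (hz r))
  simp only [neg_mul, sum_neg_distrib] at hS ⊢
  linarith

lemma mul_norm_sub_le_of_lt_neg (z : ι → ℝ) (hdiag : A r r ≤ Δ) (hoff : ∀ j ≠ r, A r j ≤ 0)
    (hrow : 0 ≤ ∑ j, A r j) {s : ι} (hsr : s ≠ r) (hrs : A r s < -δ) :
    δ * (‖z‖ - z s) ≤ ‖A *ᵥ z‖ + Δ * (‖z‖ - z r) := by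
  have h := sum_row_mul_norm_add_sum_le z hdiag hoff (S := {s}) (by simpa using hsr.symm)
  have hs : δ * (‖z‖ - z s) ≤ -A r s * (‖z‖ - z s) :=
    mul_le_mul_of_nonneg_right (by linarith)
      (sub_nonneg.2 (apply_le_pi_norm z s))
  have hrow : 0 ≤ (∑ j, A r j) * ‖z‖ := mul_nonneg hrow (norm_nonneg z)
  rw [sum_singleton] at h
  linarith

lemma mul_norm_le_of_le_sum_row (z : ι → ℝ) (hdiag : A r r ≤ Δ) (hoff : ∀ j ≠ r, A r j ≤ 0)
    (hrow : δ ≤ ∑ j, A r j) : δ * ‖z‖ ≤ ‖A *ᵥ z‖ + Δ * (‖z‖ - z r) := by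
  have h := sum_row_mul_norm_add_sum_le z hdiag hoff (notMem_empty r)
  rw [sum_empty, add_zero] at h
  exact (mul_le_mul_of_nonneg_right hrow (norm_nonneg z)).trans h

end RowInequalities

lemma Matrix.sum_abs_le_of_forall_norm_mulVec_le {m n : Type*} [Fintype m] [Fintype n]
    (B : Matrix m n ℝ) {C : ℝ} (hC : 0 ≤ C) (hB : ∀ y, ‖B *ᵥ y‖ ≤ C * ‖y‖) (i : m) :
    ∑ j, |B i j| ≤ C := by
  set y : n → ℝ := fun j => SignType.sign (B i j)
  have hy : ‖y‖ ≤ 1 := (pi_norm_le_iff_of_nonneg zero_le_one).2 fun j => by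
    rcases lt_trichotomy (B i j) 0 with h | h | h <;> simp [y, h]
  calc ∑ j, |B i j| = (B *ᵥ y) i := by simp [y, mulVec, dotProduct, self_mul_sign]
    _ ≤ ‖B *ᵥ y‖ := apply_le_pi_norm (B *ᵥ y) i
    _ ≤ C * ‖y‖ := hB y
    _ ≤ C := mul_le_of_le_one_right hC hy

namespace IsRowMMatrix

variable {N : ℕ} {δ Δ : ℝ} {A : Matrix (Fin N) (Fin N) ℝ}

lemma exists_transmissivePath (hA : IsRowMMatrix δ Δ A) (i : Fin N) :
    ∃ j, δ ≤ ∑ l, A j l ∧ TransmissivePath δ A i j := by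
  by_cases hi : δ ≤ ∑ l, A i l
  · exact ⟨i, hi, 0, fun _ => i, fun _ _ _ => Fin.ext (by omega), rfl, rfl, fun p => p.elim0⟩
  · exact hA.2.2.2.2 i hi

lemma norm_sub_le_of_transmissivePath (hA : IsRowMMatrix δ Δ A) (hδ : 0 < δ) (hδΔ : δ < Δ)
    {z : Fin N → ℝ} {i j : Fin N} (hi : z i = ‖z‖) (hij : TransmissivePath δ A i j) :
    ‖z‖ - z j ≤ mMatrixConst δ Δ (N - 1) * ‖A *ᵥ z‖ := by
  obtain ⟨L, k, hk, rfl, rfl, hpath⟩ := hij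
  have hprefix : ∀ p, ‖z‖ - z (k p) ≤ mMatrixConst δ Δ p * ‖A *ᵥ z‖ := by
    refine Fin.induction (by simp [hi]) fun p ih => ?_
    have hstep := mul_norm_sub_le_of_lt_neg z (hA.1 _).2 (fun l hl => hA.2.1 _ l hl) (hA.2.2.1 _)
      (hk.ne Fin.castSucc_lt_succ.ne') (hpath p)
    have hc := mul_mMatrixConst_succ hδ.ne' hδΔ.ne p
    rw [Fin.val_castSucc] at ih
    rw [Fin.val_succ]
    refine le_of_mul_le_mul_left ?_ hδ
    calc δ * (‖z‖ - z (k p.succ)) ≤ ‖A *ᵥ z‖ + Δ * (mMatrixConst δ Δ p * ‖A *ᵥ z‖) := by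
          have := mul_le_mul_of_nonneg_left ih (hδ.trans hδΔ).le
          linarith
      _ = δ * (mMatrixConst δ Δ (p + 1) * ‖A *ᵥ z‖) := by linear_combination -‖A *ᵥ z‖ * hc
  have hL : L ≤ N - 1 := by
    have := Fintype.card_le_of_injective k hk
    simp only [Fintype.card_fin] at this
    omega
  calc ‖z‖ - z (k (Fin.last L)) ≤ mMatrixConst δ Δ L * ‖A *ᵥ z‖ := hprefix (Fin.last L)
    _ ≤ mMatrixConst δ Δ (N - 1) * ‖A *ᵥ z‖ := by
      gcongr
      exact mMatrixConst_mono hδ hδΔ.le hL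

lemma norm_le_of_apply_eq_norm (hA : IsRowMMatrix δ Δ A) (hδ : 0 < δ) (hδΔ : δ < Δ)
    {z : Fin N → ℝ} {i : Fin N} (hi : z i = ‖z‖) :
    ‖z‖ ≤ mMatrixConst δ Δ N * ‖A *ᵥ z‖ := by
  obtain ⟨j, hj, hij⟩ := hA.exists_transmissivePath i
  have hexit := mul_norm_le_of_le_sum_row z (hA.1 j).2 (fun l hl => hA.2.1 j l hl) hj
  have hdefect := hA.norm_sub_le_of_transmissivePath hδ hδΔ hi hij
  have hc := mul_mMatrixConst_succ hδ.ne' hδΔ.ne (N - 1)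
  rw [Nat.sub_add_cancel i.pos] at hc
  refine le_of_mul_le_mul_left ?_ hδ
  calc δ * ‖z‖ ≤ ‖A *ᵥ z‖ + Δ * (mMatrixConst δ Δ (N - 1) * ‖A *ᵥ z‖) := by
        have := mul_le_mul_of_nonneg_left hdefect (hδ.trans hδΔ).le
        linarith
    _ = δ * (mMatrixConst δ Δ N * ‖A *ᵥ z‖) := by linear_combination -‖A *ᵥ z‖ * hc

lemma norm_le (hA : IsRowMMatrix δ Δ A) (hδ : 0 < δ) (hδΔ : δ < Δ) (z : Fin N → ℝ) :
    ‖z‖ ≤ mMatrixConst δ Δ N * ‖A *ᵥ z‖ := by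
  rcases isEmpty_or_nonempty (Fin N) with hN | hN
  · simp [Subsingleton.elim z 0]
  obtain ⟨t, ht⟩ := Finite.exists_max fun j => |z j|
  have hnorm : ‖z‖ = |z t| :=
    le_antisymm ((pi_norm_le_iff_of_nonneg (abs_nonneg _)).2 ht) (norm_le_pi_norm z t)
  rcases abs_choice (z t) with h | h
  · exact hA.norm_le_of_apply_eq_norm hδ hδΔ (hnorm.trans h).symm
  · simpa [mulVec_neg] using
      hA.norm_le_of_apply_eq_norm hδ hδΔ (z := -z) (i := t) (by simp [hnorm, h])

end IsRowMMatrix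

/-- A row-wise `(δ,Δ)`-M-matrix is invertible, and the `∞`-operator norm of its
inverse (the maximal absolute row sum) is bounded by
`c_N = ((Δ/δ)^N − 1)/(Δ − δ)`, a constant depending only on `δ`, `Δ` and `N`. -/
theorem stmt_8 (N : ℕ) (δ Δ : ℝ) (hδ : 0 < δ) (hδΔ : δ < Δ)
    (A : Matrix (Fin N) (Fin N) ℝ) (hA : IsRowMMatrix δ Δ A) :
    IsUnit A ∧ ∀ i, ∑ j, |A⁻¹ i j| ≤ ((Δ / δ) ^ N - 1) / (Δ - δ) := by
  have hbound := hA.norm_le hδ hδΔ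
  have hdet : IsUnit A.det := isUnit_iff_ne_zero.2 fun h => by
    obtain ⟨v, hv, hAv⟩ := exists_mulVec_eq_zero_iff.2 h
    exact hv (by simpa [hAv] using hbound v)
  refine ⟨(isUnit_iff_isUnit_det A).2 hdet, sum_abs_le_of_forall_norm_mulVec_le _
    (C := mMatrixConst δ Δ N) (mMatrixConst_nonneg hδ hδΔ.le N) fun y => ?_⟩
  simpa [mulVec_mulVec, mul_nonsing_inv _ hdet] using hbound (A⁻¹ *ᵥ y)
end

section
/- Let δ, Δ > 0 with Δ > δ. If A ∈ M_N(ℝ) is such that Aᵀ is a row-wise (δ,Δ)-M-matrix, then A is invertible and ‖A⁻¹‖₁ ≤ C where C depends only on δ, Δ and N. -/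
open Matrix
open Finset

private lemma core_bound {N : ℕ} {δ Δ : ℝ} (hδ : 0 < δ) (hδΔ : δ < Δ)
    {B : Matrix (Fin N) (Fin N) ℝ} (hB : IsRowMMatrix δ Δ B)
    {x : Fin N → ℝ} {ε : ℝ} (hε : 0 ≤ ε) (hy : ∀ i, |(B *ᵥ x) i| ≤ ε)
    {m : ℝ} (hm0 : 0 ≤ m) (hub : ∀ j, x j ≤ m) {i0 : Fin N} (hi0 : x i0 = m) :
    m ≤ (Δ * (δ⁻¹ * (Δ/δ + 1)^N) + 1) / δ * ε := by
  obtain ⟨hdiag, hoff, hrow, -, hpath⟩ := hB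
  have hΔ0 : 0 < Δ := hδ.trans hδΔ
  have hbase : (1:ℝ) ≤ Δ/δ + 1 := by
    have : 0 ≤ Δ/δ := by positivity
    linarith
  -- node equality
  have hSeq : ∀ i, ∑ l ∈ univ.erase i, (-B i l) * (m - x l)
      = B i i * (m - x i) - (∑ l, B i l) * m + (B *ᵥ x) i := by
    intro i
    have e0 : ∀ l ∈ univ.erase i, (-B i l) * (m - x l) = B i l * x l - B i l * m :=
      fun l _ => by ring
    rw [Finset.sum_congr rfl e0, Finset.sum_sub_distrib]
    have e1 : ∑ l ∈ univ.erase i, B i l * x l + B i i * x i = (B *ᵥ x) i := by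
      rw [Finset.sum_erase_add univ _ (mem_univ i)]
      simp [Matrix.mulVec, dotProduct]
    have e2 : ∑ l ∈ univ.erase i, B i l + B i i = ∑ l, B i l := by
      rw [Finset.sum_erase_add univ _ (mem_univ i)]
    rw [← Finset.sum_mul]
    linear_combination e1 - m * e2
  have hSnn : ∀ i, ∀ l ∈ univ.erase i, (0:ℝ) ≤ (-B i l) * (m - x l) := by
    intro i l hl
    have hl' : l ≠ i := (Finset.mem_erase.mp hl).1
    have := hoff i l hl'
    have := hub l
    nlinarith
  have hSle : ∀ i, ∑ l ∈ univ.erase i, (-B i l) * (m - x l) ≤ Δ * (m - x i) + ε := by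
    intro i
    rw [hSeq i]
    have h1 := (hdiag i).2
    have h2 := hub i
    have h3 := hrow i
    have h4 := (abs_le.mp (hy i)).2
    nlinarith
  have hstep : ∀ i j, j ≠ i → B i j < -δ → m - x j ≤ (Δ * (m - x i) + ε) / δ := by
    intro i j hne hlt
    rw [le_div_iff₀ hδ]
    have h1 : (-B i j) * (m - x j) ≤ ∑ l ∈ univ.erase i, (-B i l) * (m - x l) :=
      Finset.single_le_sum (hSnn i) (Finset.mem_erase.mpr ⟨hne, mem_univ j⟩)
    have h2 := hSle i
    have h3 := hub j
    nlinarith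
  have hend : ∀ i, δ ≤ ∑ l, B i l → δ * m ≤ Δ * (m - x i) + ε := by
    intro i hri
    have h0 : (0:ℝ) ≤ ∑ l ∈ univ.erase i, (-B i l) * (m - x l) :=
      Finset.sum_nonneg (hSnn i)
    rw [hSeq i] at h0
    have h1 := (hdiag i).2
    have h2 := hub i
    have h4 := (abs_le.mp (hy i)).2
    nlinarith
  -- final argument
  by_cases hc : δ ≤ ∑ l, B i0 l
  · have h := hend i0 hc
    rw [hi0, sub_self, mul_zero, zero_add] at h
    rw [div_mul_eq_mul_div, le_div_iff₀ hδ]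
    have hgN : (0:ℝ) ≤ δ⁻¹ * (Δ/δ + 1)^N := by positivity
    nlinarith [mul_nonneg (mul_nonneg hΔ0.le hgN) hε]
  · obtain ⟨j, hjg, L, k, kinj, k0, klast, kstep⟩ := hpath i0 hc
    have hLN : L + 1 ≤ N := by
      simpa using Fintype.card_le_of_injective k kinj
    have claim : ∀ n, ∀ h : n < L + 1,
        m - x (k ⟨n, h⟩) ≤ ε * (δ⁻¹ * (Δ/δ + 1)^n) := by
      intro n
      induction n with
      | zero =>
        intro h
        have h0 : (⟨0, h⟩ : Fin (L+1)) = 0 := rfl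
        rw [h0, k0, hi0, sub_self]
        positivity
      | succ n ih =>
        intro h
        have hn : n < L + 1 := by omega
        have hnL : n < L := by omega
        have hs := kstep ⟨n, hnL⟩
        have hcast : (⟨n, hnL⟩ : Fin L).castSucc = (⟨n, hn⟩ : Fin (L+1)) := rfl
        have hsucc : (⟨n, hnL⟩ : Fin L).succ = (⟨n+1, h⟩ : Fin (L+1)) := rfl
        have hne : k (⟨n, hnL⟩ : Fin L).succ ≠ k (⟨n, hnL⟩ : Fin L).castSucc := by
          intro hEq
          have := kinj hEq
          simp [Fin.ext_iff] at this
        have h2 := hstep _ _ hne hs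
        rw [hcast, hsucc] at h2 hs
        have ihn := ih hn
        have hnonneg : 0 ≤ m - x (k ⟨n, hn⟩) := by linarith [hub (k ⟨n, hn⟩)]
        have hP : (1:ℝ) ≤ (Δ/δ + 1)^n := one_le_pow₀ hbase
        have hRHS : ε * (δ⁻¹ * (Δ/δ + 1)^(n+1)) * δ = ε * ((Δ/δ+1)^n * (Δ/δ+1)) := by
          rw [pow_succ]
          field_simp
        refine h2.trans ?_
        rw [div_le_iff₀ hδ, hRHS]
        have hsplit : ε * ((Δ/δ+1)^n * (Δ/δ+1))
            = Δ * (ε * (δ⁻¹ * (Δ/δ+1)^n)) + ε * (Δ/δ+1)^n := by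
          field_simp
        rw [hsplit]
        have hA := mul_le_mul_of_nonneg_left ihn hΔ0.le
        have hE := mul_le_mul_of_nonneg_left hP hε
        linarith
    have hlastidx : (⟨L, Nat.lt_succ_self L⟩ : Fin (L+1)) = Fin.last L := rfl
    have hclast := claim L (Nat.lt_succ_self L)
    rw [hlastidx, klast] at hclast
    have hLn : L ≤ N := by omega
    have hmono : (Δ/δ + 1)^L ≤ (Δ/δ + 1)^N := pow_le_pow_right₀ (by linarith) hLn
    have hj2 := hend j hjg
    have hδi : (0:ℝ) ≤ δ⁻¹ := by positivity
    have : m - x j ≤ ε * (δ⁻¹ * (Δ/δ + 1)^N) := by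
      refine le_trans hclast ?_
      have := mul_le_mul_of_nonneg_left hmono hδi
      nlinarith
    rw [div_mul_eq_mul_div, le_div_iff₀ hδ]
    nlinarith

/-- If `Aᵀ` is a row-wise `(δ,Δ)`-M-matrix then `A` is invertible and the
`1`-operator norm of `A⁻¹` (the maximal absolute column sum) is bounded by a
constant `C` depending only on `δ`, `Δ` and `N`. -/
theorem stmt_9 (N : ℕ) (δ Δ : ℝ) (hδ : 0 < δ) (hδΔ : δ < Δ) :
    ∃ C : ℝ, 0 < C ∧ ∀ A : Matrix (Fin N) (Fin N) ℝ,
      IsRowMMatrix δ Δ Aᵀ →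
      IsUnit A ∧ ∀ j, ∑ i, |A⁻¹ i j| ≤ C := by
  have hΔ0 : 0 < Δ := hδ.trans hδΔ
  refine ⟨(Δ * (δ⁻¹ * (Δ/δ + 1)^N) + 1) / δ, by positivity, ?_⟩
  intro A hB
  have hker : ∀ v : Fin N → ℝ, Aᵀ *ᵥ v = 0 → v = 0 := by
    intro v hv
    by_contra hv0
    obtain ⟨i1, hi1⟩ := Function.ne_iff.mp hv0
    obtain ⟨i, -, hmax⟩ := Finset.exists_max_image univ (fun l => |v l|) ⟨i1, mem_univ i1⟩
    have hvi : 0 < |v i| := lt_of_lt_of_le (abs_pos.mpr hi1) (hmax i1 (mem_univ i1))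
    set w : Fin N → ℝ := if 0 ≤ v i then v else -v with hw
    have hw0 : Aᵀ *ᵥ w = 0 := by
      rw [hw]; split_ifs
      · exact hv
      · rw [Matrix.mulVec_neg, hv, neg_zero]
    have hwi : w i = |v i| := by
      rw [hw]; split_ifs with h
      · exact (abs_of_nonneg h).symm
      · simp [abs_of_neg (lt_of_not_ge h)]
    have hub : ∀ l, w l ≤ |v i| := by
      intro l
      have h1 : |w l| = |v l| := by rw [hw]; split_ifs <;> simp
      calc w l ≤ |w l| := le_abs_self _
        _ = |v l| := h1
        _ ≤ |v i| := hmax l (mem_univ l)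
    have := core_bound hδ hδΔ hB (ε := 0) le_rfl
      (by intro i'; rw [hw0]; simp) (abs_nonneg _) hub hwi
    rw [mul_zero] at this
    linarith
  have hdet : Aᵀ.det ≠ 0 := by
    intro h
    obtain ⟨v, hv0, hv⟩ := (Matrix.exists_mulVec_eq_zero_iff).mpr h
    exact hv0 (hker v hv)
  have hdetA : A.det ≠ 0 := by rwa [← Matrix.det_transpose]
  have hAu : IsUnit A := (Matrix.isUnit_iff_isUnit_det A).mpr (isUnit_iff_ne_zero.mpr hdetA)
  refine ⟨hAu, fun j => ?_⟩
  set s : Fin N → ℝ := fun i => if 0 ≤ A⁻¹ i j then 1 else -1 with hs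
  set xv : Fin N → ℝ := (Aᵀ)⁻¹ *ᵥ s with hxv
  have hBx : Aᵀ *ᵥ xv = s := by
    rw [hxv, Matrix.mulVec_mulVec, Matrix.mul_nonsing_inv _ (isUnit_iff_ne_zero.mpr hdet), Matrix.one_mulVec]
  have hys : ∀ i, |(Aᵀ *ᵥ xv) i| ≤ 1 := by
    intro i
    rw [hBx, hs]
    dsimp only
    split_ifs <;> simp
  have hxj : xv j = ∑ i, |A⁻¹ i j| := by
    have hBinv : (Aᵀ)⁻¹ = (A⁻¹)ᵀ := (Matrix.transpose_nonsing_inv A).symm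
    rw [hxv, hBinv]
    simp only [Matrix.mulVec, dotProduct, Matrix.transpose_apply]
    refine Finset.sum_congr rfl fun i _ => ?_
    rw [hs]
    dsimp only
    split_ifs with h
    · rw [mul_one, abs_of_nonneg h]
    · rw [abs_of_neg (lt_of_not_ge h)]; ring
  obtain ⟨i, -, hmax⟩ := Finset.exists_max_image univ xv ⟨j, mem_univ j⟩
  by_cases hm : 0 ≤ xv i
  · have hb := core_bound hδ hδΔ hB zero_le_one hys hm
      (fun l => hmax l (mem_univ l)) rfl
    rw [mul_one] at hb
    calc ∑ i', |A⁻¹ i' j| = xv j := hxj.symm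
      _ ≤ xv i := hmax j (mem_univ j)
      _ ≤ _ := hb
  · exfalso
    have h0 : 0 ≤ xv j := by
      rw [hxj]; positivity
    exact hm (le_trans h0 (hmax j (mem_univ j)))
end

section
/- In the Newton iteration step, suppose z ∈ ℝᴺ with ‖z‖_∞ = 1, z_i = 1, ‖Az‖_∞ ≤ α, and A is a row-wise (δ,Δ)-M-matrix. If {k₀ = i, …, k_L} is a δ-transmissive path in A, then z_{k_p} ≥ 1 − c_p·α for all p ∈ {0, …, L}, where c_p = ((Δ/δ)^p − 1)/(Δ − δ). -/
open Matrix

/-- Along a `δ`-transmissive path, a vector `z` with `‖z‖_∞ = 1`, `z i = 1` and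
`‖A z‖_∞ ≤ α` satisfies `z (k p) ≥ 1 - c_p α`, with
`c_p = ((Δ/δ)^p − 1)/(Δ − δ)`. -/
theorem stmt_10 (N : ℕ) (δ Δ α : ℝ) (hδ : 0 < δ) (hδΔ : δ < Δ)
    (A : Matrix (Fin N) (Fin N) ℝ)
    (hdiag : ∀ i, δ ≤ A i i ∧ A i i ≤ Δ)
    (hoff : ∀ i j, j ≠ i → A i j ≤ 0)
    (hrow : ∀ i, 0 ≤ ∑ j, A i j)
    (z : Fin N → ℝ) (i : Fin N)
    (hzi : z i = 1)
    (hz : ∀ j, |z j| ≤ 1)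
    (hAz : ∀ j, |∑ l, A j l * z l| ≤ α)
    (L : ℕ) (k : Fin (L + 1) → Fin N)
    (hinj : Function.Injective k) (hk0 : k 0 = i)
    (hpath : ∀ p : Fin L, A (k p.castSucc) (k p.succ) < -δ) :
    ∀ p : Fin (L + 1),
      1 - ((Δ / δ) ^ (p : ℕ) - 1) / (Δ - δ) * α ≤ z (k p) := by
  have hα : 0 ≤ α := le_trans (abs_nonneg _) (hAz i)
  have hΔδ : (1 : ℝ) ≤ Δ / δ := (one_le_div hδ).mpr hδΔ.le
  have hΔpos : (0 : ℝ) < Δ := hδ.trans hδΔ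
  intro p
  induction p using Fin.induction with
  | zero => simp [hk0, hzi]
  | succ p ih =>
    set r := k p.castSucc with hr
    set q := k p.succ with hq
    have hArq : A r q < -δ := hpath p
    have hqr : q ≠ r := by
      intro h
      have h1 : δ ≤ A r q := by rw [h]; exact (hdiag r).1
      linarith
    set c : ℝ := ((Δ / δ) ^ (p : ℕ) - 1) / (Δ - δ) with hcdef
    have hc : 0 ≤ c :=
      div_nonneg (sub_nonneg.2 (one_le_pow₀ hΔδ)) (by linarith)
    have hsum1 : ∑ l, A r l * (z l - 1) ≤ α := by
      have h1 : ∑ l, A r l * z l ≤ α := (abs_le.mp (hAz r)).2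
      have h2 : 0 ≤ ∑ l, A r l := hrow r
      have h3 : ∑ l, A r l * (z l - 1) = (∑ l, A r l * z l) - ∑ l, A r l := by
        rw [← Finset.sum_sub_distrib]; apply Finset.sum_congr rfl; intro l _; ring
      linarith
    have hsplit : A r r * (z r - 1) + A r q * (z q - 1) ≤ ∑ l, A r l * (z l - 1) := by
      have h1 : ∑ l, A r l * (z l - 1)
          = A r r * (z r - 1) + ∑ l ∈ Finset.univ.erase r, A r l * (z l - 1) :=
        (Finset.add_sum_erase _ _ (Finset.mem_univ r)).symm
      have hqmem : q ∈ Finset.univ.erase r := Finset.mem_erase.mpr ⟨hqr, Finset.mem_univ q⟩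
      have h2 : ∑ l ∈ Finset.univ.erase r, A r l * (z l - 1)
          = A r q * (z q - 1) + ∑ l ∈ (Finset.univ.erase r).erase q, A r l * (z l - 1) :=
        (Finset.add_sum_erase _ _ hqmem).symm
      have h3 : 0 ≤ ∑ l ∈ (Finset.univ.erase r).erase q, A r l * (z l - 1) := by
        apply Finset.sum_nonneg
        intro l hl
        have hlr : l ≠ r := (Finset.mem_erase.mp (Finset.mem_of_mem_erase hl)).1
        have hzl : z l ≤ 1 := (abs_le.mp (hz l)).2
        nlinarith [hoff r l hlr, hzl]
      rw [h1, h2]; linarith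
    have hzr1 : z r ≤ 1 := (abs_le.mp (hz r)).2
    have hzq1 : z q ≤ 1 := (abs_le.mp (hz q)).2
    have hd := hdiag r
    have hA1 : Δ * (z r - 1) ≤ A r r * (z r - 1) :=
      mul_le_mul_of_nonpos_right hd.2 (by linarith)
    have hA2 : δ * (1 - z q) ≤ (-A r q) * (1 - z q) :=
      mul_le_mul_of_nonneg_right (by linarith) (by linarith)
    have hih : 1 - c * α ≤ z r := ih
    have hΔc : Δ * (1 - z r) ≤ Δ * (c * α) :=
      mul_le_mul_of_nonneg_left (by linarith) hΔpos.le
    have hkey : δ * (1 - z q) ≤ α + Δ * (c * α) := by nlinarith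
    have hrec : ∀ x : ℝ, δ * ((x * (Δ / δ) - 1) / (Δ - δ)) = 1 + Δ * ((x - 1) / (Δ - δ)) := by
      intro x
      have h1 : (Δ : ℝ) - δ ≠ 0 := by linarith
      field_simp
      ring
    have hrec2 : δ * (((Δ / δ) ^ ((p : ℕ) + 1) - 1) / (Δ - δ)) = 1 + Δ * c := by
      rw [hcdef, pow_succ]; exact hrec _
    have hps : ((p.succ : Fin (L + 1)) : ℕ) = (p : ℕ) + 1 := Fin.val_succ p
    rw [hps]
    nlinarith [hkey, hrec2, hδ]
end
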